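/- Let X be a Banach space, (yᵢ) a normalized basic sequence with constant 2 and Y = [y]. If S : Y → X is strictly singular, then for every ε > 0 there exists a normalized block basic sequence (y'ᵢ) of (yᵢ) such that ‖S u‖ ≤ ε‖u‖ for all u in the closed span of (y'ᵢ). -/

import Mathlib

open Filter Topology

noncomputable section

variable {E F : Type*}

def IsInfDimClosed [NormedAddCommGroup E] [NormedSpace ℂ E] (M : Submodule ℂ E) : Prop :=
  IsClosed (M : Set E) ∧ ¬ FiniteDimensional ℂ M

def HI (E : Type*) [NormedAddCommGroup E] [NormedSpace ℂ E] : Prop :=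
  ∀ M N : Submodule ℂ E, IsInfDimClosed M → IsInfDimClosed N → ∀ ε > 0,
    ∃ u ∈ M, ∃ v ∈ N, ‖u‖ = 1 ∧ ‖v‖ = 1 ∧ ‖u - v‖ ≤ ε

def StrictlySingular [NormedAddCommGroup E] [NormedSpace ℂ E]
    [NormedAddCommGroup F] [NormedSpace ℂ F] (S : E →L[ℂ] F) : Prop :=
  ∀ M : Submodule ℂ E, IsInfDimClosed M → ∀ c > 0, ∃ x ∈ M, ‖S x‖ < c * ‖x‖

def IsNBasic2 [NormedAddCommGroup E] [NormedSpace ℂ E] (y : ℕ → E) : Prop :=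
  (∀ i, ‖y i‖ = 1) ∧ ∀ (a : ℕ → ℂ) (m n : ℕ), m ≤ n →
    ‖∑ i ∈ Finset.range m, a i • y i‖ ≤ 2 * ‖∑ i ∈ Finset.range n, a i • y i‖

def IsBlockOf [NormedAddCommGroup E] [NormedSpace ℂ E] (w z : ℕ → E) : Prop :=
  ∃ (a : ℕ → ℂ) (F : ℕ → Finset ℕ), (∀ k, (F k).Nonempty) ∧
    (∀ k i j, i ∈ F k → j ∈ F (k+1) → i < j) ∧
    (∀ k, w k = ∑ i ∈ F k, a i • z i) ∧ (∀ k, w k ≠ 0)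

def IsNBlockOf [NormedAddCommGroup E] [NormedSpace ℂ E] (w z : ℕ → E) : Prop :=
  IsBlockOf w z ∧ ∀ k, ‖w k‖ = 1

def cSpan [NormedAddCommGroup E] [NormedSpace ℂ E] (y : ℕ → E) : Submodule ℂ E :=
  (Submodule.span ℂ (Set.range y)).topologicalClosure

def tailSpan [NormedAddCommGroup E] [NormedSpace ℂ E] (y : ℕ → E) (k : ℕ) : Submodule ℂ E :=
  cSpan (fun i => y (i + k))

theorem mem_cSpan [NormedAddCommGroup E] [NormedSpace ℂ E] (y : ℕ → E) (i : ℕ) :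
    y i ∈ cSpan y :=
  (Submodule.span ℂ (Set.range y)).le_topologicalClosure (Submodule.subset_span ⟨i, rfl⟩)

theorem tailSpan_le [NormedAddCommGroup E] [NormedSpace ℂ E] (y : ℕ → E) (k : ℕ) :
    tailSpan y k ≤ cSpan y :=
  Submodule.topologicalClosure_mono (Submodule.span_mono (by rintro _ ⟨i, rfl⟩; exact ⟨i + k, rfl⟩))

def inclCLM [NormedAddCommGroup E] [NormedSpace ℂ E] {M N : Submodule ℂ E} (h : M ≤ N) :
    M →L[ℂ] N :=
  LinearMap.mkContinuous (Submodule.inclusion h) 1 (by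
    intro x
    simp [Submodule.inclusion])

/-!
Strict singularity of `S` on the tail spans `[y i : i ≥ k]`, together with openness of
`{v | ‖S v‖ < c ‖v‖}`, yields normalized blocks `w` supported beyond any `k` with `‖S w‖` as
small as wished. Successive such blocks with `‖S w m‖ ≤ ε / 8 * 2⁻ᵐ` form a block sequence, which
is again basic with constant `2`, so the coefficients of `u = ∑ b m • w m` satisfy `‖b m‖ ≤ 4 ‖u‖`.
Summing the geometric series gives `‖S u‖ ≤ ε ‖u‖` on the span of the blocks, hence on its closure.
-/

open Finset

section BasicSequence

variable [NormedAddCommGroup E] [NormedSpace ℂ E]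

theorem exists_sum_range_eq_of_mem_span {z : ℕ → E} {v : E}
    (hv : v ∈ Submodule.span ℂ (Set.range z)) :
    ∃ (b : ℕ → ℂ) (K : ℕ), ∑ m ∈ range K, b m • z m = v := by
  obtain ⟨l, rfl⟩ := Finsupp.mem_span_range_iff_exists_finsupp.1 hv
  obtain ⟨K, hK⟩ := l.support.exists_nat_subset_range
  exact ⟨l, K, (Finsupp.sum_of_support_subset l hK (fun i a => a • z i) fun i _ =>
    zero_smul ℂ (z i)).symm⟩

theorem IsNBasic2.norm_coeff_le {y : ℕ → E} (hy : IsNBasic2 y) (a : ℕ → ℂ) {m n : ℕ}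
    (hmn : m < n) : ‖a m‖ ≤ 4 * ‖∑ i ∈ range n, a i • y i‖ := by
  have hm := hy.2 a m n hmn.le
  have hm1 := hy.2 a (m + 1) n hmn
  calc ‖a m‖ = ‖∑ i ∈ range (m + 1), a i • y i - ∑ i ∈ range m, a i • y i‖ := by
        rw [sum_range_succ_sub_sum, norm_smul, hy.1, mul_one]
    _ ≤ ‖∑ i ∈ range (m + 1), a i • y i‖ + ‖∑ i ∈ range m, a i • y i‖ := norm_sub_le _ _
    _ ≤ 4 * ‖∑ i ∈ range n, a i • y i‖ := by linarith

theorem IsNBasic2.linearIndependent {y : ℕ → E} (hy : IsNBasic2 y) : LinearIndependent ℂ y := by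
  rw [linearIndependent_iff]
  intro l hl
  ext i
  obtain ⟨n, hn⟩ := (insert i l.support).exists_nat_subset_range
  rw [Finsupp.linearCombination_apply,
    Finsupp.sum_of_support_subset l ((subset_insert _ _).trans hn) (fun j a => a • y j) fun j _ =>
      zero_smul ℂ (y j)] at hl
  simpa [hl] using hy.norm_coeff_le l (mem_range.1 (hn (mem_insert_self i _)))

theorem IsNBasic2.isInfDimClosed_tailSpan {y : ℕ → E} (hy : IsNBasic2 y) (k : ℕ) :
    IsInfDimClosed (tailSpan y k) := by
  refine ⟨Submodule.isClosed_topologicalClosure _, fun _ => ?_⟩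
  have hli : LinearIndependent ℂ fun i => (⟨y (i + k), mem_cSpan _ i⟩ : tailSpan y k) :=
    .of_comp (tailSpan y k).subtype (hy.linearIndependent.comp _ (add_left_injective k))
  have := hli.finite_of_isNoetherian
  exact not_finite ℕ

end BasicSequence

section Blocks

variable [NormedAddCommGroup E] [NormedSpace ℂ E] [NormedAddCommGroup F] [NormedSpace ℂ F]

def blockSeq (y : ℕ → E) (N : ℕ → ℕ) (a : ℕ → ℂ) (m : ℕ) : E :=
  ∑ j ∈ Ico (N m) (N (m + 1)), a j • y j

def blockIndex (N : ℕ → ℕ) (j : ℕ) : ℕ :=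
  Nat.findGreatest (fun m => N m ≤ j) j

theorem blockIndex_eq {N : ℕ → ℕ} (hN : StrictMono N) {m j : ℕ}
    (hj : j ∈ Ico (N m) (N (m + 1))) : blockIndex N j = m := by
  rw [mem_Ico] at hj
  refine Nat.findGreatest_eq_iff.2 ⟨(hN.id_le m).trans hj.1, fun _ => hj.1, fun n hmn _ hn => ?_⟩
  exact (hN.monotone hmn).not_gt (hn.trans_lt hj.2)

theorem sum_range_smul_blockSeq (y : ℕ → E) {N : ℕ → ℕ} (hN : StrictMono N) (hN0 : N 0 = 0)
    (a b : ℕ → ℂ) (K : ℕ) :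
    ∑ m ∈ range K, b m • blockSeq y N a m =
      ∑ j ∈ range (N K), (b (blockIndex N j) * a j) • y j := by
  induction K with
  | zero => simp [hN0]
  | succ K ih =>
    rw [sum_range_succ, ih, ← sum_range_add_sum_Ico _ (hN.monotone K.le_succ), blockSeq, smul_sum]
    congr 1
    refine sum_congr rfl fun j hj => ?_
    rw [blockIndex_eq hN hj, smul_smul]

theorem isNBlockOf_blockSeq (y : ℕ → E) {N : ℕ → ℕ} (hN : StrictMono N) (a : ℕ → ℂ)
    (hnorm : ∀ m, ‖blockSeq y N a m‖ = 1) : IsNBlockOf (blockSeq y N a) y :=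
  ⟨⟨a, fun m => Ico (N m) (N (m + 1)), fun m => nonempty_Ico.2 (hN m.lt_succ_self),
    fun _ _ _ hi hj => (mem_Ico.1 hi).2.trans_le (mem_Ico.1 hj).1, fun _ => rfl,
    fun m => norm_ne_zero_iff.1 (by rw [hnorm m]; exact one_ne_zero)⟩, hnorm⟩

theorem IsNBasic2.blockSeq {y : ℕ → E} (hy : IsNBasic2 y) {N : ℕ → ℕ} (hN : StrictMono N)
    (hN0 : N 0 = 0) {a : ℕ → ℂ} (hnorm : ∀ m, ‖blockSeq y N a m‖ = 1) :
    IsNBasic2 (blockSeq y N a) := by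
  refine ⟨hnorm, fun b K L hKL => ?_⟩
  simp only [sum_range_smul_blockSeq y hN hN0]
  exact hy.2 _ _ _ (hN.monotone hKL)

theorem IsNBasic2.norm_apply_le_of_mem_cSpan {z : ℕ → E} (hz : IsNBasic2 z) (T : E →L[ℂ] F)
    {ε : ℝ} (hT : ∀ m, ‖T (z m)‖ ≤ ε / 8 * (1 / 2) ^ m) {u : E} (hu : u ∈ cSpan z) :
    ‖T u‖ ≤ ε * ‖u‖ := by
  have hε : 0 ≤ ε := by linarith [norm_nonneg (T (z 0)), hT 0, pow_zero (1 / 2 : ℝ)]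
  have hspan : ∀ v ∈ Submodule.span ℂ (Set.range z), ‖T v‖ ≤ ε * ‖v‖ := by
    intro v hv
    obtain ⟨b, K, rfl⟩ := exists_sum_range_eq_of_mem_span hv
    set v := ∑ m ∈ range K, b m • z m
    calc ‖T v‖ ≤ ∑ m ∈ range K, ‖b m‖ * ‖T (z m)‖ := by
          simpa only [v, map_sum, map_smul, norm_smul] using
            norm_sum_le (range K) fun m => b m • T (z m)
      _ ≤ ∑ m ∈ range K, 4 * ‖v‖ * (ε / 8 * (1 / 2) ^ m) :=
          sum_le_sum fun m hm => mul_le_mul (hz.norm_coeff_le b (mem_range.1 hm)) (hT m)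
            (norm_nonneg _) (by positivity)
      _ = ε / 2 * ‖v‖ * ∑ m ∈ range K, (1 / 2 : ℝ) ^ m := by
          rw [mul_sum]; exact sum_congr rfl fun _ _ => by ring
      _ ≤ ε / 2 * ‖v‖ * 2 := by gcongr; exact sum_geometric_two_le K
      _ = ε * ‖v‖ := by ring
  have hclosed : IsClosed {v : E | ‖T v‖ ≤ ε * ‖v‖} := isClosed_le (by fun_prop) (by fun_prop)
  rw [cSpan, ← SetLike.mem_coe, Submodule.topologicalClosure_coe] at hu
  exact closure_minimal hspan hclosed hu

end Blocks

section StrictlySingular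

variable [NormedAddCommGroup E] [NormedSpace ℂ E] [NormedAddCommGroup F] [NormedSpace ℂ F]
  {T : E →L[ℂ] F} {y : ℕ → E}

theorem StrictlySingular.exists_mem_span_tail (hT : StrictlySingular T) (hy : IsNBasic2 y)
    (k : ℕ) {c : ℝ} (hc : 0 < c) :
    ∃ v ∈ Submodule.span ℂ (Set.range fun i => y (i + k)), ‖T v‖ < c * ‖v‖ := by
  obtain ⟨x, hx, hTx⟩ := hT _ (hy.isInfDimClosed_tailSpan k) c hc
  have hopen : IsOpen {v : E | ‖T v‖ < c * ‖v‖} := isOpen_lt (by fun_prop) (by fun_prop)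
  rw [tailSpan, cSpan, ← SetLike.mem_coe, Submodule.topologicalClosure_coe, mem_closure_iff] at hx
  obtain ⟨v, hTv, hv⟩ := hx _ hopen hTx
  exact ⟨v, hv, hTv⟩

theorem StrictlySingular.exists_normalized_block (hT : StrictlySingular T) (hy : IsNBasic2 y)
    (k : ℕ) {δ : ℝ} (hδ : 0 < δ) :
    ∃ n, k < n ∧ ∃ a : ℕ → ℂ,
      ‖∑ j ∈ Ico k n, a j • y j‖ = 1 ∧ ‖T (∑ j ∈ Ico k n, a j • y j)‖ ≤ δ := by
  obtain ⟨v, hv, hTv⟩ := hT.exists_mem_span_tail hy k hδ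
  obtain ⟨b, K, rfl⟩ := exists_sum_range_eq_of_mem_span hv
  set v := ∑ i ∈ range K, b i • y (i + k)
  have hv0 : 0 < ‖v‖ := pos_of_mul_pos_right ((norm_nonneg _).trans_lt hTv) hδ.le
  have hK : 0 < K := Nat.pos_of_ne_zero fun h => by simp [v, h] at hv0
  have hsum : ∑ j ∈ Ico k (k + K), ((‖v‖⁻¹ : ℂ) * b (j - k)) • y j = (‖v‖⁻¹ : ℂ) • v := by
    simp only [v, sum_Ico_eq_sum_range, add_tsub_cancel_left, smul_sum, smul_smul]
    exact sum_congr rfl fun i _ => by rw [add_comm k]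
  refine ⟨k + K, by omega, fun j => (‖v‖⁻¹ : ℂ) * b (j - k), ?_, ?_⟩ <;> rw [hsum]
  · exact norm_smul_inv_norm (norm_pos_iff.1 hv0)
  · rw [map_smul, norm_smul, norm_inv, Complex.norm_real, norm_norm, inv_mul_le_iff₀ hv0]
    linarith

theorem StrictlySingular.exists_isNBlockOf_norm_apply_le (hT : StrictlySingular T)
    (hy : IsNBasic2 y) {ε : ℝ} (hε : 0 < ε) :
    ∃ y' : ℕ → E, IsNBlockOf y' y ∧ ∀ u ∈ cSpan y', ‖T u‖ ≤ ε * ‖u‖ := by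
  choose n hkn a ha using fun k m =>
    hT.exists_normalized_block hy k (δ := ε / 8 * (1 / 2) ^ m) (by positivity)
  -- block `m` is the one chosen for starting point `N m` and smallness index `m`
  let N : ℕ → ℕ := fun m => Nat.rec 0 (fun m Nm => n Nm m) m
  have hN : StrictMono N := strictMono_nat_of_lt_succ fun m => hkn (N m) m
  let g : ℕ → ℂ := fun j => a (N (blockIndex N j)) (blockIndex N j) j
  have hblock (m : ℕ) : blockSeq y N g m = ∑ j ∈ Ico (N m) (N (m + 1)), a (N m) m j • y j :=
    sum_congr rfl fun j hj => by simp only [g, blockIndex_eq hN hj]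
  have hnorm (m : ℕ) : ‖blockSeq y N g m‖ = 1 := by rw [hblock]; exact (ha (N m) m).1
  refine ⟨blockSeq y N g, isNBlockOf_blockSeq y hN g hnorm, fun u hu => ?_⟩
  refine (hy.blockSeq hN rfl hnorm).norm_apply_le_of_mem_cSpan T (fun m => ?_) hu
  rw [hblock]
  exact (ha (N m) m).2

end StrictlySingular

section Isometry

variable [NormedAddCommGroup E] [NormedSpace ℂ E] [NormedAddCommGroup F] [NormedSpace ℂ F]
  (f : E →ₗᵢ[ℂ] F)

theorem IsNBasic2.of_comp {y : ℕ → E} (hy : IsNBasic2 (f ∘ y)) : IsNBasic2 y := by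
  refine ⟨fun i => by simpa using hy.1 i, fun a m n hmn => ?_⟩
  have h := hy.2 a m n hmn
  simp only [Function.comp_apply, ← f.map_smul, ← map_sum, f.norm_map] at h
  exact h

theorem IsNBlockOf.comp {w z : ℕ → E} (h : IsNBlockOf w z) : IsNBlockOf (f ∘ w) (f ∘ z) := by
  obtain ⟨⟨a, B, hne, hlt, hw, -⟩, hnorm⟩ := h
  have hnorm' (k : ℕ) : ‖(f ∘ w) k‖ = 1 := by simp [hnorm]
  exact ⟨⟨a, B, hne, hlt, fun k => by simp [hw, map_sum],
    fun k => norm_ne_zero_iff.1 (by rw [hnorm' k]; exact one_ne_zero)⟩, hnorm'⟩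

theorem LinearIsometry.map_mem_cSpan_comp_iff (z : ℕ → E) (u : E) :
    f u ∈ cSpan (f ∘ z) ↔ u ∈ cSpan z := by
  have hspan : (Submodule.span ℂ (Set.range (f ∘ z)) : Set F) =
      f '' Submodule.span ℂ (Set.range z) := by
    rw [Set.range_comp]
    exact congrArg SetLike.coe (Submodule.map_span f.toLinearMap _).symm
  rw [cSpan, cSpan, ← SetLike.mem_coe, ← SetLike.mem_coe, Submodule.topologicalClosure_coe,
    Submodule.topologicalClosure_coe, hspan,
    f.isometry.isEmbedding.isInducing.closure_eq_preimage_closure_image, Set.mem_preimage]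

end Isometry

theorem statement16_general {X : Type*} [NormedAddCommGroup X] [NormedSpace ℂ X]
    (y : ℕ → X) (hy : IsNBasic2 y) (S : cSpan y →L[ℂ] X) (hS : StrictlySingular S) :
    ∀ ε > 0, ∃ y' : ℕ → X, IsNBlockOf y' y ∧
      ∀ u : cSpan y, (u : X) ∈ cSpan y' → ‖S u‖ ≤ ε * ‖u‖ := by
  intro ε hε
  let ι := (cSpan y).subtypeₗᵢ
  let z : ℕ → cSpan y := fun i => ⟨y i, mem_cSpan y i⟩
  obtain ⟨z', hz', hsmall⟩ :=
    hS.exists_isNBlockOf_norm_apply_le (IsNBasic2.of_comp ι (y := z) hy) hε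
  exact ⟨ι ∘ z', hz'.comp ι, fun u hu => hsmall u ((ι.map_mem_cSpan_comp_iff z' u).1 hu)⟩

theorem statement16 {X : Type*} [NormedAddCommGroup X] [NormedSpace ℂ X] [CompleteSpace X]
    (y : ℕ → X) (hy : IsNBasic2 y) (S : cSpan y →L[ℂ] X) (hS : StrictlySingular S) :
    ∀ ε > 0, ∃ y' : ℕ → X, IsNBlockOf y' y ∧
      ∀ u : cSpan y, (u : X) ∈ cSpan y' → ‖S u‖ ≤ ε * ‖u‖ :=
  statement16_general y hy S hS
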